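/- Every P_4-free circulant is paired: if G = C_n(D) is a circulant graph that contains no induced subgraph isomorphic to the path on four vertices, then there exist a nonnegative integer k and positive integers a_1,b_1,…,a_k,b_k with a_i·b_i ∣ n for all i ∈ [k] such that G is isomorphic to the k-paired circulant C(n; a_1,b_1; …; a_k,b_k). -/

import Mathlib

open SimpleGraph Finset

/-- The circulant graph `C_n(D)` on vertex set `ZMod n` with distance set
`D ⊆ {1, …, n-1}`: distinct vertices `i, j` are adjacent iff `(i - j) mod n ∈ D`. -/
def circulant (n : ℕ) (D : Finset ℕ) : SimpleGraph (ZMod n) :=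
  SimpleGraph.fromRel (fun i j => (i - j).val ∈ D)

/-- A graph is a CIS graph if every maximal clique and every maximal stable set
(equivalently, every maximal clique of the complement) intersect. -/
def SimpleGraph.IsCIS {V : Type*} (G : SimpleGraph V) : Prop :=
  ∀ C S : Set V, Maximal G.IsClique C → Maximal Gᶜ.IsClique S → (C ∩ S).Nonempty

/-- The distance set `{d ∈ {1,…,n-1} : a ∣ d ∧ a*b ∤ d}` of a pair `(a, b)`. -/
def pairedD (n a b : ℕ) : Finset ℕ :=
  (Finset.Icc 1 (n - 1)).filter (fun d => a ∣ d ∧ ¬ (a * b) ∣ d)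

/-- The `k`-paired circulant `C(n; a_1,b_1; …; a_k,b_k)` (index type `ι`). -/
def pairedCirculant (n : ℕ) {ι : Type*} [Fintype ι] (a b : ι → ℕ) : SimpleGraph (ZMod n) :=
  circulant n (Finset.univ.biUnion (fun i => pairedD n (a i) (b i)))

/-- The lexicographic product of two simple graphs. -/
def lexProd {α β : Type*} (G : SimpleGraph α) (H : SimpleGraph β) : SimpleGraph (α × β) where
  Adj p q := G.Adj p.1 q.1 ∨ (p.1 = q.1 ∧ H.Adj p.2 q.2)
  symm := by
    constructor
    intro p q h
    rcases h with h | ⟨h1, h2⟩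
    · exact Or.inl h.symm
    · exact Or.inr ⟨h1.symm, h2.symm⟩
  loopless := by
    constructor
    intro p h
    rcases h with h | ⟨_, h⟩
    · exact G.loopless.irrefl _ h
    · exact H.loopless.irrefl _ h

/-
A `P₄`-free graph on at least two vertices is disconnected or has a disconnected complement
(Seinsche). For a circulant `C_n(D)` the vertices reachable from `0` form a subgroup, so
disconnectedness means that a divisor `m > 1` of `n` divides every element of `D`; for the
complement it means that `D` contains every distance not divisible by `m`. Either way `D` is the
union of `{d : m ∤ d}` (or of nothing) with `m • D'`, where `C_{n/m}(D')` embeds into `C_n(D)` via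
`x ↦ m x` and so is again `P₄`-free. Induction on `n` then gives pairs `(a, b)` for `D'`, which
become the pairs `(m a, b)` for `D`, and the non-multiples of `m` are the pair `(1, m)` (the pair
`(1, 1)` contributes nothing).
-/

namespace SimpleGraph

variable {V W : Type*} {G : SimpleGraph V}

def P4Free (G : SimpleGraph V) : Prop := IsEmpty (pathGraph 4 ↪g G)

theorem P4Free.false_of_induced_path (hG : G.P4Free) {a b c d : V} (hab : G.Adj a b)
    (hbc : G.Adj b c) (hcd : G.Adj c d) (hac : ¬ G.Adj a c) (hbd : ¬ G.Adj b d)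
    (had : ¬ G.Adj a d) : False := by
  have hac' : a ≠ c := by rintro rfl; exact had hcd
  have hbd' : b ≠ d := by rintro rfl; exact had hab
  have had' : a ≠ d := by rintro rfl; exact hbd hab.symm
  refine hG.false ⟨⟨![a, b, c, d], ?_⟩, fun {i j} => ?_⟩
  · intro i j hij
    fin_cases i <;> fin_cases j <;> simp_all [hab.ne, hbc.ne, hcd.ne, hab.ne.symm, hbc.ne.symm,
      hcd.ne.symm, hac'.symm, hbd'.symm, had'.symm]
  · change G.Adj (![a, b, c, d] i) (![a, b, c, d] j) ↔ _
    fin_cases i <;> fin_cases j <;>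
      simp [pathGraph_adj, hab, hbc, hcd, hab.symm, hbc.symm, hcd.symm, hac, hbd, had,
        G.adj_comm c a, G.adj_comm d a, G.adj_comm d b]

theorem P4Free.of_embedding {H : SimpleGraph W} (hG : G.P4Free) (f : H ↪g G) : H.P4Free :=
  ⟨fun g => hG.false (f.comp g)⟩

-- the complement of the path `0-1-2-3` is the path `1-3-0-2`
def pathGraphFourIsoCompl : pathGraph 4 ≃g (pathGraph 4)ᶜ where
  toFun := ![2, 0, 3, 1]
  invFun := ![1, 3, 0, 2]
  left_inv := by decide
  right_inv := by decide
  map_rel_iff' {i j} := by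
    fin_cases i <;> fin_cases j <;> simp [pathGraph_adj]

theorem P4Free.compl (hG : G.P4Free) : Gᶜ.P4Free := by
  refine ⟨fun f => hG.false ?_⟩
  simpa using (Embedding.complEquiv f).comp pathGraphFourIsoCompl.toEmbedding

theorem Walk.exists_adj_reachable_induce_compl_singleton {u v : V} (w : G.Walk u v)
    (hu : u ≠ v) :
    ∃ x : ({v}ᶜ : Set V), G.Adj x v ∧ (G.induce {v}ᶜ).Reachable ⟨u, hu⟩ x := by
  induction w with
  | nil => exact absurd rfl hu
  | @cons u c v huc w ih =>
    by_cases hc : c = v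
    · subst hc
      exact ⟨⟨u, hu⟩, huc, .rfl⟩
    · obtain ⟨x, hxv, hx⟩ := ih hc
      exact ⟨x, hxv, (show (G.induce {v}ᶜ).Adj ⟨u, hu⟩ ⟨c, hc⟩ from huc).reachable.trans hx⟩

theorem P4Free.connected_induce_compl_singleton (hG : G.P4Free) (hconn : G.Connected) {v y : V}
    (hyv : y ≠ v) (hy : ¬ G.Adj v y) : (G.induce {v}ᶜ).Connected := by
  classical
  set H := G.induce {v}ᶜ
  have : Nonempty ({v}ᶜ : Set V) := ⟨⟨y, hyv⟩⟩
  refine ⟨fun z₁ z₂ => ?_⟩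
  by_contra hz
  obtain ⟨z, hz⟩ : ∃ z, ¬ H.Reachable z ⟨y, hyv⟩ := by
    by_cases h₁ : H.Reachable z₁ ⟨y, hyv⟩
    · exact ⟨z₂, fun h₂ => hz (h₁.trans h₂.symm)⟩
    · exact ⟨z₁, h₁⟩
  obtain ⟨x₁, hx₁v, hx₁⟩ :=
    (hconn.preconnected y v).some.exists_adj_reachable_induce_compl_singleton hyv
  obtain ⟨x₂, hx₂v, hx₂⟩ :=
    (hconn.preconnected z v).some.exists_adj_reachable_induce_compl_singleton z.2
  -- on a walk in `H` from the neighbour `x₁` of `v` to the non-neighbour `y`, some edge `pq`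
  -- leaves the neighbourhood of `v`; then `q - p - v - x₂` is an induced path
  obtain ⟨w⟩ := hx₁.symm
  obtain ⟨e, he, hp, hq⟩ := w.exists_boundary_dart {u | G.Adj u v} hx₁v (fun h => hy h.symm)
  have reach_y : ∀ u ∈ w.support, H.Reachable u ⟨y, hyv⟩ :=
    fun u hu => (w.takeUntil u hu).reachable.symm.trans w.reachable
  have not_adj_x₂ : ∀ u ∈ w.support, ¬ G.Adj u x₂ := fun u hu h =>
    hz (hx₂.trans ((show H.Adj u x₂ from h).symm.reachable.trans (reach_y u hu)))
  exact hG.false_of_induced_path e.adj.symm hp hx₂v.symm hq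
    (not_adj_x₂ _ (w.dart_fst_mem_support_of_mem_darts he))
    (not_adj_x₂ _ (w.dart_snd_mem_support_of_mem_darts he))

theorem compl_induce (G : SimpleGraph V) (s : Set V) : (G.induce s)ᶜ = Gᶜ.induce s := by
  ext; simp [Subtype.ext_iff]

/-- Seinsche's theorem. -/
theorem P4Free.not_connected_or_not_connected_compl [Finite V] [Nontrivial V] (hG : G.P4Free) :
    ¬ G.Connected ∨ ¬ Gᶜ.Connected := by
  induction h : Nat.card V using Nat.strong_induction_on generalizing V with
  | _ N IH =>
  by_contra! hconn
  obtain ⟨v⟩ := ‹Nontrivial V›.to_nonempty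
  obtain ⟨y, hy⟩ := hconn.2.preconnected.exists_adj_of_nontrivial v
  obtain ⟨y', hy'⟩ := hconn.1.preconnected.exists_adj_of_nontrivial v
  rcases subsingleton_or_nontrivial ({v}ᶜ : Set V) with hs | hs
  · have : y = y' := congrArg Subtype.val (Subsingleton.elim (α := ({v}ᶜ : Set V))
      ⟨y, hy.ne'⟩ ⟨y', hy'.ne'⟩)
    exact hy.2 (this ▸ hy')
  · have hlt : Nat.card ({v}ᶜ : Set V) < N := h ▸ Finite.card_subtype_lt (x := v) (by simp)
    refine (IH _ hlt (hG.of_embedding (Embedding.induce {v}ᶜ)) rfl).elim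
      (· (hG.connected_induce_compl_singleton hconn.1 hy.ne' hy.2)) (· ?_)
    rw [compl_induce]
    exact hG.compl.connected_induce_compl_singleton hconn.2 hy'.ne' (fun h => h.2 hy')

end SimpleGraph

section Circulant

variable {n : ℕ} {D : Finset ℕ}

theorem circulant_adj_add_left (a i j : ZMod n) :
    (circulant n D).Adj (a + i) (a + j) ↔ (circulant n D).Adj i j := by
  simp [circulant, add_sub_add_left_eq_sub]

theorem circulant_reachable_add_left (a : ZMod n) {i j : ZMod n}
    (h : (circulant n D).Reachable i j) : (circulant n D).Reachable (a + i) (a + j) :=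
  h.map ⟨(a + ·), (circulant_adj_add_left a _ _).2⟩

theorem exists_dvd_of_not_connected_circulant [NeZero n] (hD : ∀ d ∈ D, d < n)
    (h : ¬ (circulant n D).Connected) : ∃ m, 1 < m ∧ m ∣ n ∧ ∀ d ∈ D, m ∣ d := by
  let H : AddSubgroup ℤ :=
    { carrier := {k | (circulant n D).Reachable 0 k}
      zero_mem' := by simp
      add_mem' := fun {a b} ha hb => ha.trans (by simpa using circulant_reachable_add_left a hb)
      neg_mem' := fun {a} ha => by
        simpa using (circulant_reachable_add_left (-a : ZMod n) ha).symm }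
  obtain ⟨a, ha⟩ := Int.subgroup_cyclic H
  have mem_H : ∀ k, k ∈ H ↔ a ∣ k := by
    intro k; rw [ha, ← AddSubgroup.zmultiples_eq_closure, Int.mem_zmultiples_iff]
  have han : a ∣ n := (mem_H n).1 (by simp [H])
  refine ⟨a.natAbs, ?_, Int.natAbs_dvd_natAbs.2 han,
    fun d hd => Int.natAbs_dvd_natAbs.2 ((mem_H d).1 ?_)⟩
  · have ha0 : a.natAbs ≠ 0 := by
      rintro h0
      simp [Int.natAbs_eq_zero.1 h0, NeZero.ne n] at han
    suffices a.natAbs ≠ 1 by omega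
    intro ha1
    refine h (connected_iff_exists_forall_reachable _ |>.2 ⟨0, fun z => ?_⟩)
    obtain ⟨k, rfl⟩ := ZMod.intCast_surjective z
    exact (mem_H k).2 (Int.natAbs_dvd.1 (ha1 ▸ one_dvd _))
  · show (circulant n D).Reachable 0 ((d : ℤ) : ZMod n)
    rw [Int.cast_natCast]
    by_cases hd0 : (d : ZMod n) = 0
    · rw [hd0]
    · refine Adj.reachable ?_
      simp [circulant, Ne.symm hd0, ZMod.val_natCast_of_lt (hD d hd), hd]

theorem circulant_adj_iff [NeZero n] (hsym : ∀ d ∈ D, n - d ∈ D) {i j : ZMod n} :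
    (circulant n D).Adj i j ↔ i ≠ j ∧ (i - j).val ∈ D := by
  refine ⟨fun ⟨hij, h⟩ => ⟨hij, h.elim id fun h => ?_⟩, fun ⟨hij, h⟩ => ⟨hij, .inl h⟩⟩
  rw [← neg_sub, ZMod.neg_val, if_neg (sub_ne_zero.2 hij.symm)]
  exact hsym _ h

theorem compl_circulant [NeZero n] (hsym : ∀ d ∈ D, n - d ∈ D) :
    (circulant n D)ᶜ = circulant n (Icc 1 (n - 1) \ D) := by
  have hsym' : ∀ d ∈ Icc 1 (n - 1) \ D, n - d ∈ Icc 1 (n - 1) \ D := by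
    intro d hd
    simp only [mem_sdiff, mem_Icc] at hd ⊢
    refine ⟨by omega, fun h => hd.2 ?_⟩
    simpa [Nat.sub_sub_self (by omega : d ≤ n)] using hsym _ h
  have hval : ∀ i j : ZMod n, i ≠ j → (i - j).val ∈ Icc 1 (n - 1) := fun i j hij => by
    have := (i - j).val_lt
    have := (ZMod.val_ne_zero _).2 (sub_ne_zero.2 hij)
    simp only [mem_Icc]; omega
  ext i j
  rw [compl_adj, circulant_adj_iff hsym, circulant_adj_iff hsym', mem_sdiff]
  exact ⟨fun h => ⟨h.1, hval i j h.1, fun h' => h.2 ⟨h.1, h'⟩⟩,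
    fun h => ⟨h.1, fun h' => h.2.2 h'.2⟩⟩

end Circulant

section Scaling

variable {m n' : ℕ} {D : Finset ℕ}

def scaleHom (m n' : ℕ) : ZMod n' →+ ZMod (m * n') :=
  ZMod.lift n' ⟨(Int.castAddHom _).comp (AddMonoidHom.mulLeft (m : ℤ)), by
    change ((m * n' : ℤ) : ZMod (m * n')) = 0
    exact_mod_cast ZMod.natCast_self _⟩

theorem scaleHom_apply [NeZero n'] (z : ZMod n') :
    scaleHom m n' z = ((m * z.val : ℕ) : ZMod (m * n')) := by
  conv_lhs => rw [← ZMod.natCast_zmod_val z, ← Int.cast_natCast, scaleHom, ZMod.lift_coe]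
  simp

theorem val_scaleHom [NeZero n'] (hm : 0 < m) (z : ZMod n') :
    (scaleHom m n' z).val = m * z.val := by
  rw [scaleHom_apply, ZMod.val_natCast_of_lt (Nat.mul_lt_mul_of_pos_left z.val_lt hm)]

theorem scaleHom_injective [NeZero n'] (hm : 0 < m) : Function.Injective (scaleHom m n') :=
  fun x y h => by
    have := congrArg ZMod.val h
    rw [val_scaleHom hm, val_scaleHom hm] at this
    exact ZMod.val_injective _ (Nat.eq_of_mul_eq_mul_left hm this)

def dividedDistances (m n' : ℕ) (D : Finset ℕ) : Finset ℕ :=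
  (range n').filter (fun t => m * t ∈ D)

@[simp]
theorem mem_dividedDistances {t : ℕ} :
    t ∈ dividedDistances m n' D ↔ t < n' ∧ m * t ∈ D := by
  simp [dividedDistances]

def circulantScaleEmbedding [NeZero n'] (hm : 0 < m) :
    circulant n' (dividedDistances m n' D) ↪g circulant (m * n') D where
  toFun := scaleHom m n'
  inj' := scaleHom_injective hm
  map_rel_iff' {x y} := by
    change (circulant _ D).Adj (scaleHom m n' x) (scaleHom m n' y) ↔ _
    simp only [circulant, fromRel_adj, ← map_sub, val_scaleHom hm, mem_dividedDistances,
      ZMod.val_lt, true_and, (scaleHom_injective hm).ne_iff]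

theorem dividedDistances_subset_Icc (h0 : 0 ∉ D) : dividedDistances m n' D ⊆ Icc 1 (n' - 1) := by
  intro t ht
  rw [mem_dividedDistances] at ht
  have : t ≠ 0 := by rintro rfl; exact h0 (by simpa using ht.2)
  simp only [mem_Icc]; omega

theorem dividedDistances_symm (h0 : 0 ∉ D) (hsym : ∀ d ∈ D, m * n' - d ∈ D) :
    ∀ t ∈ dividedDistances m n' D, n' - t ∈ dividedDistances m n' D := by
  intro t ht
  have := mem_Icc.1 (dividedDistances_subset_Icc h0 ht)
  rw [mem_dividedDistances] at ht ⊢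
  refine ⟨by omega, ?_⟩
  simpa [Nat.mul_sub] using hsym _ ht.2

theorem mul_mem_pairedD_mul_iff (hm : 0 < m) {a b e : ℕ} :
    m * e ∈ pairedD (m * n') (m * a) b ↔ e ∈ pairedD n' a b := by
  have hlt : m * e < m * n' ↔ e < n' := Nat.mul_lt_mul_left hm
  have h0 : m * e = 0 ↔ e = 0 := by simp [hm.ne']
  simp only [pairedD, mem_filter, mem_Icc, mul_assoc, Nat.mul_dvd_mul_iff_left hm]
  omega

theorem pairedD_mul_mul (hm : 0 < m) (a b : ℕ) :
    pairedD (m * n') (m * a) b = (pairedD n' a b).image (m * ·) := by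
  ext d
  refine ⟨fun hd => ?_, fun hd => ?_⟩
  · obtain ⟨e, rfl⟩ : m ∣ d := (dvd_mul_right m a).trans (mem_filter.1 hd).2.1
    exact mem_image_of_mem _ ((mul_mem_pairedD_mul_iff hm).1 hd)
  · obtain ⟨e, he, rfl⟩ := mem_image.1 hd
    exact (mul_mem_pairedD_mul_iff hm).2 he

theorem eq_pairedD_one_union_image_dividedDistances {c : ℕ} (hD : D ⊆ Icc 1 (m * n' - 1))
    (hcm : c ∣ m) (hc : ∀ d ∈ Icc 1 (m * n' - 1), ¬ m ∣ d → (d ∈ D ↔ ¬ c ∣ d)) :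
    D = pairedD (m * n') 1 c ∪ (dividedDistances m n' D).image (m * ·) := by
  ext d
  simp only [pairedD, mem_union, mem_filter, one_dvd, one_mul, true_and, mem_image,
    mem_dividedDistances]
  constructor
  · intro hd
    by_cases hmd : m ∣ d
    · obtain ⟨t, rfl⟩ := hmd
      have := mem_Icc.1 (hD hd)
      exact .inr ⟨t, ⟨Nat.lt_of_mul_lt_mul_left (by omega : m * t < m * n'), hd⟩, rfl⟩
    · exact .inl ⟨hD hd, (hc d (hD hd) hmd).1 hd⟩
  · rintro (⟨hd, hcd⟩ | ⟨t, ⟨-, ht⟩, rfl⟩)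
    · exact (hc d hd fun hmd => hcd (hcm.trans hmd)).2 hcd
    · exact ht

end Scaling

theorem exists_dvd_forall_mem_iff_of_p4Free {n : ℕ} {D : Finset ℕ} (hn : 2 ≤ n)
    (hD : D ⊆ Icc 1 (n - 1)) (hsym : ∀ d ∈ D, n - d ∈ D) (hP4 : (circulant n D).P4Free) :
    ∃ m c, 1 < m ∧ m ∣ n ∧ c ∣ m ∧ ∀ d ∈ Icc 1 (n - 1), ¬ m ∣ d → (d ∈ D ↔ ¬ c ∣ d) := by
  have : NeZero n := ⟨by omega⟩
  have : Fact (1 < n) := ⟨hn⟩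
  have lt_of_mem : ∀ {E : Finset ℕ}, E ⊆ Icc 1 (n - 1) → ∀ d ∈ E, d < n := fun hE d hd => by
    have := mem_Icc.1 (hE hd); omega
  -- `c = 1` when `circulant n D` is disconnected, `c = m` when its complement is
  rcases hP4.not_connected_or_not_connected_compl with h | h
  · obtain ⟨m, hm, hmn, hmD⟩ := exists_dvd_of_not_connected_circulant (lt_of_mem hD) h
    exact ⟨m, 1, hm, hmn, one_dvd m, fun d _ hmd =>
      iff_of_false (fun hd => hmd (hmD d hd)) (not_not.2 (one_dvd d))⟩
  · rw [compl_circulant hsym] at h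
    obtain ⟨m, hm, hmn, hmE⟩ := exists_dvd_of_not_connected_circulant (lt_of_mem sdiff_subset) h
    exact ⟨m, m, hm, hmn, dvd_rfl, fun d hd hmd =>
      iff_of_true (by_contra fun hdD => hmd (hmE d (mem_sdiff.2 ⟨hd, hdD⟩))) hmd⟩

theorem exists_eq_biUnion_pairedD_of_p4Free (n : ℕ) (D : Finset ℕ) (hD : D ⊆ Icc 1 (n - 1))
    (hsym : ∀ d ∈ D, n - d ∈ D) (hP4 : (circulant n D).P4Free) :
    ∃ (k : ℕ) (a b : Fin k → ℕ), (∀ i, 0 < a i) ∧ (∀ i, 0 < b i) ∧ (∀ i, a i * b i ∣ n) ∧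
      D = univ.biUnion fun i => pairedD n (a i) (b i) := by
  induction n using Nat.strong_induction_on generalizing D with
  | _ n IH =>
  rcases Nat.lt_or_ge n 2 with hn | hn
  · refine ⟨0, Fin.elim0, Fin.elim0, (·.elim0), (·.elim0), (·.elim0), ?_⟩
    simpa [Icc_eq_empty_of_lt (by omega : n - 1 < 1)] using hD
  obtain ⟨m, c, hm, ⟨n', rfl⟩, hcm, hc⟩ := exists_dvd_forall_mem_iff_of_p4Free hn hD hsym hP4
  have hn' : 0 < n' := by rcases n'.eq_zero_or_pos with rfl | h <;> omega
  have : NeZero n' := ⟨hn'.ne'⟩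
  have h0 : 0 ∉ D := fun h => by simpa using hD h
  obtain ⟨k, a, b, ha, hb, hab, hD'⟩ := IH n' (by nlinarith) (dividedDistances m n' D)
    (dividedDistances_subset_Icc h0) (dividedDistances_symm h0 hsym)
    (hP4.of_embedding (circulantScaleEmbedding (by omega)))
  refine ⟨k + 1, Fin.cons 1 (m * a ·), Fin.cons c b,
    Fin.forall_fin_succ.2 ⟨one_pos, fun i => Nat.mul_pos (by omega) (ha i)⟩,
    Fin.forall_fin_succ.2 ⟨Nat.pos_of_dvd_of_pos hcm (by omega), hb⟩,
    Fin.forall_fin_succ.2 ⟨by simpa using dvd_mul_of_dvd_left hcm n',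
      fun i => by simpa [mul_assoc] using mul_dvd_mul_left m (hab i)⟩, ?_⟩
  conv_lhs => rw [eq_pairedD_one_union_image_dividedDistances hD hcm hc, hD', biUnion_image]
  ext d
  simp [Fin.exists_fin_succ, pairedD_mul_mul (by omega : 0 < m)]

theorem stmt_18_general (n : ℕ) (D : Finset ℕ) (hD : D ⊆ Finset.Icc 1 (n - 1))
    (hsym : ∀ d ∈ D, n - d ∈ D)
    (hP4 : IsEmpty (SimpleGraph.pathGraph 4 ↪g circulant n D)) :
    ∃ (k : ℕ) (a b : Fin k → ℕ),
      (∀ i, 0 < a i) ∧ (∀ i, 0 < b i) ∧ (∀ i, a i * b i ∣ n) ∧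
      Nonempty (circulant n D ≃g pairedCirculant n a b) := by
  obtain ⟨k, a, b, ha, hb, hab, rfl⟩ := exists_eq_biUnion_pairedD_of_p4Free n D hD hsym hP4
  exact ⟨k, a, b, ha, hb, hab, ⟨.refl⟩⟩

/-- Every `P₄`-free circulant is paired: it is isomorphic to a `k`-paired
circulant `C(n; a₁,b₁; …; a_k,b_k)` for some `k` and suitable pairs. -/
theorem stmt_18 (n : ℕ) (hn : 0 < n) (D : Finset ℕ) (hD : D ⊆ Finset.Icc 1 (n - 1))
    (hsym : ∀ d ∈ D, n - d ∈ D)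
    (hP4 : IsEmpty (SimpleGraph.pathGraph 4 ↪g circulant n D)) :
    ∃ (k : ℕ) (a b : Fin k → ℕ),
      (∀ i, 0 < a i) ∧ (∀ i, 0 < b i) ∧ (∀ i, a i * b i ∣ n) ∧
      Nonempty (circulant n D ≃g pairedCirculant n a b) :=
  stmt_18_general n D hD hsym hP4
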